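/- arXiv:1812.01398 — 3 statements merged into one kernel-verified Lean document; each statement's English description precedes it below -/
import Mathlib

section
/- Let X be a complex Banach space and (aₙ) a sequence in X such that ∑ aₙ n^{-σ} converges in X for some σ ∈ ℝ. If X has cotype q (2 ≤ q < ∞) and the series ∑ aₙ n^{-σ} converges unconditionally, then for every δ > 1 − 1/q the series ∑ ‖aₙ‖ n^{-(σ+δ)} converges. -/
open Filter Finset

/-- A Banach space `X` has cotype `q` with constant `C` if
`(∑ ‖xᵢ‖^q)^{1/q} ≤ C ⬝ E‖∑ εᵢ xᵢ‖` for all finite families, where the expectation is the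
average over all choices of signs `εᵢ = ±1`. -/
def HasCotype (X : Type*) [NormedAddCommGroup X] (q C : ℝ) : Prop :=
  ∀ (N : ℕ) (x : Fin N → X),
    (∑ i, ‖x i‖ ^ q) ^ (1 / q) ≤
      C * ((∑ ε : Fin N → Bool, ‖∑ i, (if ε i then x i else -x i)‖) / 2 ^ N)

lemma tail_subset_bound {X : Type*} [NormedAddCommGroup X] [NormedSpace ℂ X]
    (g : ℕ → X)
    (H : ∀ ε : ℕ → ℝ, (∀ n, ε n = 1 ∨ ε n = -1) →
      ∃ L : X, Tendsto (fun N : ℕ => ∑ n ∈ Finset.Icc 1 N, ((ε n : ℝ) : ℂ) • g n)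
        atTop (nhds L)) :
    ∃ m : ℕ, ∀ F : Finset ℕ, (∀ n ∈ F, m < n) → ‖∑ n ∈ F, g n‖ ≤ 1 := by
  classical
  by_contra hcon
  push_neg at hcon
  choose F hFgt hFnorm using hcon
  set m : ℕ → ℕ := fun k => Nat.rec 0 (fun _ mk => (F mk).sup id) k with hm
  have hms : ∀ k, m (k + 1) = (F (m k)).sup id := fun k => rfl
  have hmem : ∀ k n, n ∈ F (m k) → m k < n := fun k n hn => hFgt (m k) n hn
  have hub : ∀ k n, n ∈ F (m k) → n ≤ m (k + 1) := by
    intro k n hn; rw [hms]; exact Finset.le_sup (f := id) hn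
  have hne : ∀ k, (F (m k)).Nonempty := by
    intro k
    rcases Finset.eq_empty_or_nonempty (F (m k)) with h | h
    · exfalso; have h2 := hFnorm (m k); rw [h] at h2; simp at h2; linarith
    · exact h
  have hlt : ∀ k, m k < m (k + 1) := by
    intro k; obtain ⟨n, hn⟩ := hne k
    exact lt_of_lt_of_le (hmem k n hn) (hub k n hn)
  have hsm : StrictMono m := strictMono_nat_of_lt_succ hlt
  have hk_le : ∀ k, k ≤ m k := fun k => hsm.le_apply
  set p : ℕ → Prop := fun n => ∃ k, n ∈ F (m k) with hp
  set ε : ℕ → ℝ := fun n => if p n then 1 else -1 with hε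
  have hsign : ∀ n, ε n = 1 ∨ ε n = -1 := by
    intro n; by_cases h : p n <;> simp [hε, h]
  obtain ⟨L, hL⟩ := H ε hsign
  obtain ⟨L', hL'⟩ := H (fun _ => 1) fun _ => Or.inl rfl
  set G : ℕ → X := fun N => ∑ n ∈ (Finset.Icc 1 N).filter p, g n with hGdef
  have key : ∀ N, G N = (2:ℂ)⁻¹ • ((∑ n ∈ Finset.Icc 1 N, ((ε n : ℝ) : ℂ) • g n) +
      ∑ n ∈ Finset.Icc 1 N, (((fun _ => (1:ℝ)) n : ℝ) : ℂ) • g n) := by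
    intro N
    rw [← Finset.sum_add_distrib]
    have hterm : ∀ n ∈ Finset.Icc 1 N, ((ε n : ℝ) : ℂ) • g n + (((1:ℝ)) : ℂ) • g n
        = if p n then (2:ℂ) • g n else 0 := by
      intro n _
      by_cases h : p n
      · rw [if_pos h]
        have : ε n = 1 := by simp [hε, h]
        rw [this]
        norm_num
        exact (two_smul ℂ (g n)).symm
      · rw [if_neg h]
        have : ε n = -1 := by simp [hε, h]
        rw [this]
        norm_num
    rw [Finset.sum_congr rfl hterm, ← Finset.sum_filter, ← Finset.smul_sum, smul_smul]
    norm_num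
    rfl
  have hG : CauchySeq G := by
    have h2 := (hL.add hL').const_smul ((2:ℂ)⁻¹)
    exact ((h2.congr (fun N => (key N).symm))).cauchySeq
  obtain ⟨N₀, hN₀⟩ := Metric.cauchySeq_iff.1 hG 1 one_pos
  set k := N₀ with hk
  have hsub : (Finset.Icc 1 (m k)).filter p ⊆ (Finset.Icc 1 (m (k+1))).filter p :=
    Finset.filter_subset_filter _ (Finset.Icc_subset_Icc_right (hlt k).le)
  have hdiff : (Finset.Icc 1 (m (k+1))).filter p \ (Finset.Icc 1 (m k)).filter p = F (m k) := by
    ext n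
    simp only [Finset.mem_sdiff, Finset.mem_filter, Finset.mem_Icc]
    constructor
    · rintro ⟨⟨⟨h1, h2⟩, j, hj⟩, hnot⟩
      have hgt : m k < n := by
        by_contra hle; push_neg at hle; exact hnot ⟨⟨h1, hle⟩, j, hj⟩
      rcases lt_trichotomy j k with hjk | hjk | hjk
      · exfalso
        have ha : n ≤ m (j+1) := hub j n hj
        have hb : m (j+1) ≤ m k := hsm.monotone (show j+1 ≤ k by omega)
        omega
      · rwa [hjk] at hj
      · exfalso
        have h3 : m (k+1) ≤ m j := hsm.monotone (show k+1 ≤ j by omega)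
        have h4 := hmem j n hj
        omega
    · intro hn
      have h1 := hmem k n hn
      have h2 := hub k n hn
      exact ⟨⟨⟨by omega, h2⟩, ⟨k, hn⟩⟩, fun h => absurd h.1.2 (not_le.mpr h1)⟩
  have hGdiff : G (m (k+1)) - G (m k) = ∑ n ∈ F (m k), g n := by
    have h5 := Finset.sum_sdiff (f := g) hsub
    rw [hdiff] at h5
    rw [hGdef]
    simp only
    rw [← h5, add_sub_cancel_right]
  have h1 := hN₀ (m (k+1)) (le_trans (hk_le k) (hlt k).le) (m k) (hk_le k)
  rw [dist_eq_norm, hGdiff] at h1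
  exact absurd h1 (not_lt.mpr (le_of_lt (hFnorm (m k))))


lemma uniform_signed_bound {X : Type*} [NormedAddCommGroup X] [NormedSpace ℂ X]
    (g : ℕ → X)
    (H : ∀ ε : ℕ → ℝ, (∀ n, ε n = 1 ∨ ε n = -1) →
      ∃ L : X, Tendsto (fun N : ℕ => ∑ n ∈ Finset.Icc 1 N, ((ε n : ℝ) : ℂ) • g n)
        atTop (nhds L)) :
    ∃ M : ℝ, 0 ≤ M ∧ ∀ (ε : ℕ → ℝ), (∀ n, ε n = 1 ∨ ε n = -1) → ∀ N : ℕ,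
      ‖∑ n ∈ Finset.Icc 1 N, ((ε n : ℝ) : ℂ) • g n‖ ≤ M := by
  classical
  obtain ⟨m, hm⟩ := tail_subset_bound g H
  refine ⟨(∑ n ∈ Finset.Icc 1 m, ‖g n‖) + 2, by positivity, ?_⟩
  intro ε hε N
  rw [← Finset.sum_filter_add_sum_filter_not (Finset.Icc 1 N) (fun n => n ≤ m)]
  refine le_trans (norm_add_le _ _) (add_le_add ?_ ?_)
  · refine le_trans (norm_sum_le _ _) ?_
    have h1 : ∀ n ∈ (Finset.Icc 1 N).filter (fun n => n ≤ m), ‖((ε n : ℝ) : ℂ) • g n‖ = ‖g n‖ := by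
      intro n _
      rw [norm_smul, Complex.norm_real, Real.norm_eq_abs]
      rcases hε n with h | h <;> simp [h]
    rw [Finset.sum_congr rfl h1]
    refine Finset.sum_le_sum_of_subset_of_nonneg ?_ (fun n _ _ => norm_nonneg _)
    intro n hn
    simp only [Finset.mem_filter, Finset.mem_Icc] at hn ⊢
    exact ⟨hn.1.1, hn.2⟩
  · rw [← Finset.sum_filter_add_sum_filter_not ((Finset.Icc 1 N).filter (fun n => ¬ n ≤ m))
      (fun n => ε n = 1)]
    refine le_trans (norm_add_le _ _) ?_
    have e1 : ∑ n ∈ (((Finset.Icc 1 N).filter (fun n => ¬ n ≤ m)).filter (fun n => ε n = 1)),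
        ((ε n : ℝ) : ℂ) • g n
        = ∑ n ∈ (((Finset.Icc 1 N).filter (fun n => ¬ n ≤ m)).filter (fun n => ε n = 1)), g n := by
      refine Finset.sum_congr rfl fun n hn => ?_
      simp only [Finset.mem_filter] at hn
      rw [hn.2]
      norm_num
    have e2 : ∑ n ∈ (((Finset.Icc 1 N).filter (fun n => ¬ n ≤ m)).filter (fun n => ¬ ε n = 1)),
        ((ε n : ℝ) : ℂ) • g n
        = - ∑ n ∈ (((Finset.Icc 1 N).filter (fun n => ¬ n ≤ m)).filter (fun n => ¬ ε n = 1)),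
            g n := by
      rw [← Finset.sum_neg_distrib]
      refine Finset.sum_congr rfl fun n hn => ?_
      simp only [Finset.mem_filter] at hn
      have : ε n = -1 := (hε n).resolve_left hn.2
      rw [this]
      norm_num
    rw [e1, e2, norm_neg]
    have hb : ∀ (s : Finset ℕ), (∀ n ∈ s, ¬ n ≤ m) → ‖∑ n ∈ s, g n‖ ≤ 1 := by
      intro s hs
      exact hm s (fun n hn => not_le.mp (hs n hn))
    have hb1 := hb (((Finset.Icc 1 N).filter (fun n => ¬ n ≤ m)).filter (fun n => ε n = 1))
      (fun n hn => (Finset.mem_filter.mp (Finset.mem_filter.mp hn).1).2)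
    have hb2 := hb (((Finset.Icc 1 N).filter (fun n => ¬ n ≤ m)).filter (fun n => ¬ ε n = 1))
      (fun n hn => (Finset.mem_filter.mp (Finset.mem_filter.mp hn).1).2)
    linarith

/-- If `X` has cotype `q` and `∑ aₙ n^{-σ}` converges unconditionally, then for
every `δ > 1 - 1/q` the series `∑ ‖aₙ‖ n^{-(σ+δ)}` converges. -/
theorem summable_norm_of_unconditional_of_cotype
    (X : Type*) [NormedAddCommGroup X] [NormedSpace ℂ X] [CompleteSpace X]
    (q C : ℝ) (hq : 2 ≤ q) (hC : 0 < C) (hcot : HasCotype X q C)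
    (a : ℕ → X) (σ : ℝ)
    (hconv : ∃ L : X, Tendsto (fun N : ℕ =>
      ∑ n ∈ Finset.Icc 1 N, (((n : ℝ) ^ (-σ) : ℝ) : ℂ) • a n) atTop (nhds L))
    (huncond : ∀ ε : ℕ → ℝ, (∀ n, ε n = 1 ∨ ε n = -1) →
      ∃ L : X, Tendsto (fun N : ℕ =>
        ∑ n ∈ Finset.Icc 1 N, ((ε n * (n : ℝ) ^ (-σ) : ℝ) : ℂ) • a n) atTop (nhds L)) :
    ∀ δ : ℝ, 1 - 1 / q < δ →
      Summable (fun n : ℕ => ‖a (n + 1)‖ * ((n + 1 : ℝ)) ^ (-(σ + δ))) := by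
  classical
  have hqpos : (0:ℝ) < q := lt_of_lt_of_le two_pos hq
  have hq1 : (1:ℝ) < q := lt_of_lt_of_le one_lt_two hq
  set x : ℕ → X := fun n => (((n : ℝ) ^ (-σ) : ℝ) : ℂ) • a n with hxdef
  have H' : ∀ ε : ℕ → ℝ, (∀ n, ε n = 1 ∨ ε n = -1) →
      ∃ L : X, Tendsto (fun N : ℕ => ∑ n ∈ Finset.Icc 1 N, ((ε n : ℝ) : ℂ) • x n)
        atTop (nhds L) := by
    intro ε hε
    obtain ⟨L, hL⟩ := huncond ε hε
    refine ⟨L, hL.congr (fun N => Finset.sum_congr rfl fun n _ => ?_)⟩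
    rw [hxdef]
    simp only
    rw [Complex.ofReal_mul, mul_smul]
  obtain ⟨M, hM0, hMb⟩ := uniform_signed_bound x H'
  -- the cotype consequence : partial sums of ‖x (n+1)‖ ^ q are bounded
  have step : ∀ N : ℕ, ∑ n ∈ Finset.range N, ‖x (n + 1)‖ ^ q ≤ (C * M) ^ q := by
    intro N
    have h1 := hcot N (fun i => x (i + 1))
    -- bound each signed sum by M
    have hsgnsum : ∀ εb : Fin N → Bool,
        ‖∑ i : Fin N, (if εb i then x (i + 1) else -x (i + 1))‖ ≤ M := by
      intro εb
      set ε : ℕ → ℝ := fun n =>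
        if h : n - 1 < N ∧ 1 ≤ n then (if εb ⟨n - 1, h.1⟩ then 1 else -1) else 1 with hεdef
      have hsgn : ∀ n, ε n = 1 ∨ ε n = -1 := by
        intro n
        rw [hεdef]
        by_cases h : n - 1 < N ∧ 1 ≤ n
        · by_cases hb : εb ⟨n - 1, h.1⟩ <;> simp [h, hb]
        · simp [h]
      have hsum : ∑ i : Fin N, (if εb i then x (i + 1) else -x (i + 1))
          = ∑ n ∈ Finset.Icc 1 N, ((ε n : ℝ) : ℂ) • x n := by
        rw [← Finset.Ico_add_one_right_eq_Icc, Finset.sum_Ico_eq_sum_range]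
        show _ = ∑ i ∈ Finset.range N, ((ε (1 + i) : ℝ) : ℂ) • x (1 + i)
        have hfin : ∑ i : Fin N, (if εb i then x (i + 1) else -x (i + 1))
            = ∑ i ∈ Finset.range N,
                (if h : i < N then (if εb ⟨i, h⟩ then x (i + 1) else -x (i + 1)) else 0) := by
          rw [Finset.sum_range fun i => _]
          · refine Finset.sum_congr rfl fun i _ => ?_
            rw [dif_pos i.isLt]
        rw [hfin]
        refine Finset.sum_congr rfl fun i hi => ?_
        have hiN : i < N := Finset.mem_range.mp hi
        rw [dif_pos hiN]
        have hε1 : ε (1 + i) = (if εb ⟨i, hiN⟩ then 1 else -1) := by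
          rw [hεdef]
          have hcond : (1 + i) - 1 < N ∧ 1 ≤ 1 + i := by omega
          beta_reduce
          rw [dif_pos hcond]
          have hfe : (⟨1 + i - 1, hcond.1⟩ : Fin N) = ⟨i, hiN⟩ := Fin.ext (show 1 + i - 1 = i by omega)
          rw [hfe]
        rw [hε1]
        by_cases hb : εb ⟨i, hiN⟩
        · rw [if_pos hb, if_pos hb]
          have : (1 : ℕ) + i = i + 1 := by omega
          rw [this]
          norm_num
        · rw [if_neg hb, if_neg hb]
          have : (1 : ℕ) + i = i + 1 := by omega
          rw [this]
          norm_num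
      rw [hsum]
      exact hMb ε hsgn N
    -- average bound
    have havg : (∑ εb : Fin N → Bool, ‖∑ i : Fin N, (if εb i then x (i + 1) else -x (i + 1))‖)
        / 2 ^ N ≤ M := by
      rw [div_le_iff₀ (by positivity)]
      calc ∑ εb : Fin N → Bool, ‖∑ i : Fin N, (if εb i then x (i + 1) else -x (i + 1))‖
          ≤ ∑ _εb : Fin N → Bool, M := Finset.sum_le_sum fun εb _ => hsgnsum εb
        _ = (2 ^ N : ℝ) * M := by
            rw [Finset.sum_const, Finset.card_univ]
            simp [Fintype.card_fun]
        _ = M * 2 ^ N := by ring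
    have h2 : (∑ i : Fin N, ‖x (i + 1)‖ ^ q) ^ (1 / q) ≤ C * M :=
      le_trans h1 (mul_le_mul_of_nonneg_left havg hC.le)
    have hA0 : (0:ℝ) ≤ ∑ i : Fin N, ‖x (i + 1)‖ ^ q :=
      Finset.sum_nonneg fun i _ => Real.rpow_nonneg (norm_nonneg _) q
    have h3 : ∑ i : Fin N, ‖x (i + 1)‖ ^ q ≤ (C * M) ^ q := by
      have h4 := Real.rpow_le_rpow (Real.rpow_nonneg hA0 _) h2 hqpos.le
      rwa [← Real.rpow_mul hA0, one_div_mul_cancel (ne_of_gt hqpos), Real.rpow_one] at h4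
    calc ∑ n ∈ Finset.range N, ‖x (n + 1)‖ ^ q
        = ∑ i : Fin N, ‖x (i + 1)‖ ^ q :=
          (Fin.sum_univ_eq_sum_range (fun n => ‖x (n + 1)‖ ^ q) N).symm
      _ ≤ (C * M) ^ q := h3
  have hsum : Summable (fun n : ℕ => ‖x (n + 1)‖ ^ q) :=
    summable_of_sum_range_le (fun n => Real.rpow_nonneg (norm_nonneg _) q) step
  -- now the Hölder / Young step
  intro δ hδ
  set q' : ℝ := q / (q - 1) with hq'def
  have hpq : q.HolderConjugate q' := (Real.holderConjugate_iff_eq_conjExponent hq1).mpr rfl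
  have hq'pos : (0:ℝ) < q' := hpq.symm.pos
  have hδq' : 1 < δ * q' := by
    have hkey : (1 - 1 / q) * q' = 1 := by
      have hne : q - 1 ≠ 0 := by linarith
      rw [hq'def]
      field_simp
    calc (1:ℝ) = (1 - 1 / q) * q' := hkey.symm
      _ < δ * q' := by
          exact mul_lt_mul_of_pos_right hδ hq'pos
  have hv : Summable (fun n : ℕ => ((n : ℝ) + 1) ^ (-(δ * q'))) := by
    have h5 : Summable (fun n : ℕ => (n : ℝ) ^ (-(δ * q'))) :=
      Real.summable_nat_rpow.2 (by linarith)
    have h6 := (summable_nat_add_iff 1).2 h5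
    refine h6.congr fun n => ?_
    push_cast
    ring_nf
  have hvq' : Summable (fun n : ℕ => (((n : ℝ) + 1) ^ (-δ)) ^ q') := by
    refine hv.congr fun n => ?_
    rw [← Real.rpow_mul (by positivity), neg_mul]
  -- pointwise identity and Young bound
  have hxnorm : ∀ n : ℕ, ‖x (n + 1)‖ = ‖a (n + 1)‖ * ((n : ℝ) + 1) ^ (-σ) := by
    intro n
    rw [hxdef]
    simp only
    rw [norm_smul, Complex.norm_real, Real.norm_eq_abs]
    have hb : (0:ℝ) < ((n + 1 : ℕ) : ℝ) := by positivity
    rw [abs_of_pos (Real.rpow_pos_of_pos hb _)]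
    push_cast
    ring
  refine Summable.of_nonneg_of_le (fun n => by positivity) (fun n => ?_)
    ((hsum.div_const q).add (hvq'.div_const q'))
  have heq : ‖a (n + 1)‖ * ((n : ℝ) + 1) ^ (-(σ + δ))
      = ‖x (n + 1)‖ * ((n : ℝ) + 1) ^ (-δ) := by
    rw [hxnorm n, neg_add, Real.rpow_add (by positivity)]
    ring
  rw [heq]
  exact Real.young_inequality_of_nonneg (norm_nonneg _) (Real.rpow_nonneg (by positivity) _) hpq
end

section
/- For a Dirichlet series D = ∑ aₙ n^{-s} with coefficients in a Banach space X, the abscissa of convergence of D equals the supremum over functionals x* in the closed unit ball of X* of the abscissa of convergence of the scalar Dirichlet series ∑ x*(aₙ) n^{-s}. -/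
open Filter Finset

/-- The Dirichlet series `∑ aₙ n^{-s}` converges at `s`. -/
def DirichletConvAt {X : Type*} [NormedAddCommGroup X] [NormedSpace ℂ X]
    (a : ℕ → X) (s : ℂ) : Prop :=
  ∃ L : X, Tendsto (fun N : ℕ => ∑ n ∈ Finset.Icc 1 N, ((n : ℂ) ^ (-s)) • a n)
    atTop (nhds L)

/-- The abscissa of convergence of the Dirichlet series `∑ aₙ n^{-s}`, as an extended real:
the infimum of those `σ ∈ ℝ` such that the series converges at every `s` with `Re s > σ`
(`+∞` if the series converges nowhere, `-∞` if everywhere). -/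
noncomputable def sigmaC {X : Type*} [NormedAddCommGroup X] [NormedSpace ℂ X]
    (a : ℕ → X) : EReal :=
  sInf {x : EReal | ∃ r : ℝ, x = (r : EReal) ∧ ∀ s : ℂ, r < s.re → DirichletConvAt a s}

section Aux

variable {X : Type*} [NormedAddCommGroup X] [NormedSpace ℂ X]

lemma sum_Icc_one_eq_range {M : Type*} [AddCommMonoid M] (f : ℕ → M) (N : ℕ) :
    ∑ n ∈ Finset.Icc 1 N, f n = ∑ i ∈ Finset.range N, f (1 + i) := by
  rw [← Finset.Ico_add_one_right_eq_Icc, Finset.sum_Ico_eq_sum_range]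
  simp

lemma dirichletConvAt_map (a : ℕ → X) (φ : X →L[ℂ] ℂ) {s : ℂ}
    (h : DirichletConvAt a s) : DirichletConvAt (fun n => φ (a n)) s := by
  obtain ⟨L, hL⟩ := h
  refine ⟨φ L, ((φ.continuous.tendsto L).comp hL).congr fun N => ?_⟩
  simp only [Function.comp_apply, map_sum, map_smul, smul_eq_mul]

lemma dirichletConvAt_smul (a : ℕ → X) (c : ℂ) {s : ℂ}
    (h : DirichletConvAt a s) : DirichletConvAt (fun n => c • a n) s := by
  obtain ⟨L, hL⟩ := h
  refine ⟨c • L, (hL.const_smul c).congr fun N => ?_⟩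
  rw [Finset.smul_sum]
  exact Finset.sum_congr rfl fun n _ => smul_comm c _ _

/-- Mean value bound for differences of complex powers. -/
lemma cpow_diff_norm_le {w : ℂ} (hw : 0 < w.re) {n : ℕ} (hn : 1 ≤ n) :
    ‖(((n + 1 : ℕ)) : ℂ) ^ (-w) - ((n : ℕ) : ℂ) ^ (-w)‖ ≤ ‖w‖ * (n : ℝ) ^ (-w.re - 1) := by
  have hn0 : (0 : ℝ) < n := by exact_mod_cast hn
  set f : ℝ → ℂ := fun t => (t : ℂ) ^ (-w) with hf
  set f' : ℝ → ℂ := fun t => (-w) * (t : ℂ) ^ (-w - 1) with hf'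
  have hder : ∀ x ∈ Set.Icc (n : ℝ) ((n : ℝ) + 1),
      HasDerivWithinAt f (f' x) (Set.Icc (n : ℝ) ((n : ℝ) + 1)) x := by
    intro x hx
    have hx0 : (0 : ℝ) < x := lt_of_lt_of_le hn0 hx.1
    have hslit : (x : ℂ) ∈ Complex.slitPlane := by
      exact Complex.ofReal_mem_slitPlane.mpr hx0
    have := ((Complex.hasStrictDerivAt_cpow_const (c := -w) hslit).hasDerivAt).comp_ofReal
    exact this.hasDerivWithinAt
  have hbound : ∀ x ∈ Set.Ico (n : ℝ) ((n : ℝ) + 1),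
      ‖f' x‖ ≤ ‖w‖ * (n : ℝ) ^ (-w.re - 1) := by
    intro x hx
    have hx0 : (0 : ℝ) < x := lt_of_lt_of_le hn0 hx.1
    have h1 : ‖f' x‖ = ‖w‖ * x ^ (-w.re - 1) := by
      rw [hf', norm_mul, norm_neg]
      congr 1
      rw [Complex.norm_cpow_eq_rpow_re_of_pos hx0]
      norm_num
    rw [h1]
    exact mul_le_mul_of_nonneg_left
      (Real.rpow_le_rpow_of_nonpos hn0 hx.1 (by linarith)) (norm_nonneg w)
  have key := norm_image_sub_le_of_norm_deriv_le_segment' hder hbound ((n : ℝ) + 1)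
    (Set.right_mem_Icc.mpr (by linarith))
  simp only [add_sub_cancel_left, mul_one] at key
  simp only [hf] at key
  have e1 : ((((n : ℝ) + 1) : ℝ) : ℂ) = (((n + 1 : ℕ)) : ℂ) := by push_cast; ring
  have e2 : (((n : ℝ)) : ℂ) = ((n : ℕ) : ℂ) := by norm_cast
  rw [e1, e2] at key
  exact key

lemma summable_cpow_diff {w : ℂ} (hw : 0 < w.re) :
    Summable (fun i : ℕ => ‖(((i + 2 : ℕ)) : ℂ) ^ (-w) - (((i + 1 : ℕ)) : ℂ) ^ (-w)‖) := by
  have hsum : Summable (fun i : ℕ => ‖w‖ * ((i + 1 : ℕ) : ℝ) ^ (-w.re - 1)) := by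
    have h1 : Summable (fun n : ℕ => (n : ℝ) ^ (-w.re - 1)) :=
      Real.summable_nat_rpow.mpr (by linarith)
    have h2 : Summable (fun i : ℕ => ((i + 1 : ℕ) : ℝ) ^ (-w.re - 1)) :=
      (summable_nat_add_iff 1).mpr h1
    exact h2.mul_left ‖w‖
  refine Summable.of_nonneg_of_le (fun i => norm_nonneg _) (fun i => ?_) hsum
  simpa [show i + 1 + 1 = i + 2 by omega] using cpow_diff_norm_le hw (n := i + 1) (by omega)

/-- Dedekind-type test: if partial sums of `b` are bounded, then the Dirichlet-twisted
series converges for `Re w > 0`. -/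
lemma conv_of_bounded_partial_sums [CompleteSpace X]
    (b : ℕ → X) (C : ℝ) (hC : ∀ N, ‖∑ n ∈ Finset.Icc 1 N, b n‖ ≤ C)
    {w : ℂ} (hw : 0 < w.re) :
    ∃ L, Tendsto (fun N : ℕ => ∑ n ∈ Finset.Icc 1 N, ((n : ℂ) ^ (-w)) • b n)
      atTop (nhds L) := by
  set c : ℕ → ℂ := fun n => (n : ℂ) ^ (-w) with hc
  set B : ℕ → X := fun k => ∑ i ∈ Finset.range k, b (1 + i) with hBdef
  have hBIcc : ∀ k, B k = ∑ n ∈ Finset.Icc 1 k, b n := fun k =>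
    (sum_Icc_one_eq_range b k).symm
  have hB : ∀ k, ‖B k‖ ≤ C := fun k => by rw [hBIcc]; exact hC k
  have hC0 : 0 ≤ C := le_trans (norm_nonneg _) (hB 0)
  set d : ℕ → X := fun i => (c (1 + (i + 1)) - c (1 + i)) • B (i + 1) with hd
  have hdsum : Summable d := by
    refine Summable.of_norm_bounded
      (g := fun i => ‖(((i + 2 : ℕ)) : ℂ) ^ (-w) - (((i + 1 : ℕ)) : ℂ) ^ (-w)‖ * C)
      ((summable_cpow_diff hw).mul_right C) fun i => ?_
    rw [hd, norm_smul]
    have h1 : c (1 + (i + 1)) - c (1 + i)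
        = (((i + 2 : ℕ)) : ℂ) ^ (-w) - (((i + 1 : ℕ)) : ℂ) ^ (-w) := by
      rw [hc]; congr 2 <;> push_cast <;> ring
    rw [h1]
    exact mul_le_mul_of_nonneg_left (hB _) (norm_nonneg _)
  obtain ⟨L, hL⟩ := hdsum
  have hT : Tendsto (fun N : ℕ => ∑ i ∈ Finset.range N, d i) atTop (nhds L) :=
    hL.tendsto_sum_nat
  have hT' : Tendsto (fun N : ℕ => ∑ i ∈ Finset.range (N - 1), d i) atTop (nhds L) :=
    hT.comp (tendsto_sub_atTop_nat 1)
  have hc0 : Tendsto (fun N : ℕ => c N • B N) atTop (nhds (0 : X)) := by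
    have hev : ∀ᶠ N : ℕ in atTop, ‖c N • B N‖ ≤ (N : ℝ) ^ (-w.re) * C := by
      filter_upwards [eventually_ge_atTop 1] with N hN
      rw [norm_smul]
      have hN0 : 0 < N := hN
      have hcN : ‖c N‖ = (N : ℝ) ^ (-w.re) := by
        rw [hc, Complex.norm_natCast_cpow_of_pos hN0, Complex.neg_re]
      rw [hcN]
      exact mul_le_mul_of_nonneg_left (hB N) (Real.rpow_nonneg (Nat.cast_nonneg N) _)
    have hgt : Tendsto (fun N : ℕ => (N : ℝ) ^ (-w.re) * C) atTop (nhds 0) := by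
      have := (tendsto_rpow_neg_atTop hw).comp (tendsto_natCast_atTop_atTop (R := ℝ))
      simpa using this.mul_const C
    exact squeeze_zero_norm' hev hgt
  refine ⟨0 - L, Tendsto.congr' ?_ (hc0.sub hT')⟩
  filter_upwards [eventually_ge_atTop 1] with N hN
  have hparts := Finset.sum_range_by_parts (fun i => c (1 + i)) (fun i => b (1 + i)) N
  have h1N : 1 + (N - 1) = N := by omega
  rw [sum_Icc_one_eq_range (fun n => c n • b n) N, hparts, h1N]

end Aux

/-- The abscissa of convergence of a vector-valued Dirichlet series equals the
supremum, over functionals in the closed unit ball of the dual, of the abscissas of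
convergence of the scalarized series. -/
theorem sigmaC_eq_iSup_dual
    (X : Type*) [NormedAddCommGroup X] [NormedSpace ℂ X] [CompleteSpace X]
    (a : ℕ → X) :
    sigmaC a = ⨆ (φ : X →L[ℂ] ℂ) (_ : ‖φ‖ ≤ 1), sigmaC (fun n => φ (a n)) := by
  set T := ⨆ (φ : X →L[ℂ] ℂ) (_ : ‖φ‖ ≤ 1), sigmaC (fun n => φ (a n)) with hT
  refine le_antisymm ?_ ?_
  · -- hard direction: sigmaC a ≤ T
    by_contra hcon
    push_neg at hcon
    obtain ⟨r, hTr, hra⟩ := EReal.exists_between_coe_real hcon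
    -- show r is in the defining set, contradicting hra
    have hmem : (r : EReal) ∈ {x : EReal | ∃ r' : ℝ, x = (r' : EReal) ∧
        ∀ s : ℂ, r' < s.re → DirichletConvAt a s} := by
      refine ⟨r, rfl, fun s hs => ?_⟩
      -- scalar convergence at s₀ = r for every functional
      have hconv : ∀ φ : X →L[ℂ] ℂ, DirichletConvAt (fun n => φ (a n)) (r : ℂ) := by
        intro φ
        by_cases hφ0 : φ = 0
        · subst hφ0
          exact ⟨0, by simpa using tendsto_const_nhds⟩
        · set ψ : X →L[ℂ] ℂ := ((‖φ‖ : ℂ))⁻¹ • φ with hψ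
          have hφn : (0 : ℝ) < ‖φ‖ := norm_pos_iff.mpr hφ0
          have hψn : ‖ψ‖ ≤ 1 := by
            have h1 : ‖ψ‖ = ‖((‖φ‖ : ℂ))⁻¹‖ * ‖φ‖ := by
              rw [hψ]
              exact norm_smul ((‖φ‖ : ℂ))⁻¹ φ
            have h2 : ‖((‖φ‖ : ℂ))⁻¹‖ = ‖φ‖⁻¹ := by
              rw [norm_inv, Complex.norm_real, norm_norm]
            rw [h1, h2, inv_mul_cancel₀ (ne_of_gt hφn)]
          have hle : sigmaC (fun n => ψ (a n)) ≤ T := by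
            rw [hT]
            exact le_iSup₂ (f := fun (φ : X →L[ℂ] ℂ) (_ : ‖φ‖ ≤ 1) =>
              sigmaC (fun n => φ (a n))) ψ hψn
          have hlt : sigmaC (fun n => ψ (a n)) < ((r : ℂ).re : EReal) := by
            simp only [Complex.ofReal_re]
            exact lt_of_le_of_lt hle hTr
          have hψconv : DirichletConvAt (fun n => ψ (a n)) (r : ℂ) := by
            rw [sigmaC] at hlt
            obtain ⟨x, hx, hxlt⟩ := sInf_lt_iff.mp hlt
            obtain ⟨r', rfl, hr'⟩ := hx
            exact hr' _ (by exact_mod_cast hxlt)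
          have := dirichletConvAt_smul (fun n => ψ (a n)) ((‖φ‖ : ℂ)) hψconv
          refine this.imp fun L hL => hL.congr fun N => ?_
          refine Finset.sum_congr rfl fun n _ => ?_
          congr 1
          rw [hψ]
          simp only [ContinuousLinearMap.smul_apply, smul_eq_mul]
          rw [← mul_assoc, mul_inv_cancel₀ (by exact_mod_cast ne_of_gt hφn), one_mul]
      -- boundedness of vector partial sums at s₀ = r
      set S : ℕ → X := fun N => ∑ n ∈ Finset.Icc 1 N, ((n : ℂ) ^ (-(r : ℂ))) • a n with hS
      have hbdd : ∃ C, ∀ N, ‖S N‖ ≤ C := by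
        set g : ℕ → StrongDual ℂ X →L[ℂ] ℂ :=
          fun N => NormedSpace.inclusionInDoubleDual ℂ X (S N) with hg
        have hpt : ∀ φ : StrongDual ℂ X, ∃ C, ∀ N, ‖g N φ‖ ≤ C := by
          intro φ
          obtain ⟨L, hL⟩ := hconv φ
          have hL' : Tendsto (fun N => ‖φ (S N)‖) atTop (nhds ‖L‖) := by
            have : Tendsto (fun N => φ (S N)) atTop (nhds L) := by
              refine hL.congr fun N => ?_
              rw [hS]
              simp only [map_sum, map_smul, smul_eq_mul]
            exact this.norm
          obtain ⟨C, hCmem⟩ := hL'.bddAbove_range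
          exact ⟨C, fun N => hCmem (Set.mem_range_self N)⟩
        obtain ⟨C', hC'⟩ := banach_steinhaus hpt
        refine ⟨C', fun N => ?_⟩
        have : ‖S N‖ = ‖g N‖ := by
          rw [hg]
          exact ((NormedSpace.inclusionInDoubleDualLi ℂ (E := X)).norm_map (S N)).symm
        rw [this]; exact hC' N
      obtain ⟨C, hCb⟩ := hbdd
      -- vector convergence at s
      have hw : 0 < (s - (r : ℂ)).re := by
        simp only [Complex.sub_re, Complex.ofReal_re]
        linarith
      obtain ⟨L, hL⟩ := conv_of_bounded_partial_sums
        (fun n => ((n : ℂ) ^ (-(r : ℂ))) • a n) C (fun N => hCb N) hw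
      refine ⟨L, hL.congr fun N => Finset.sum_congr rfl fun n hn => ?_⟩
      have hn1 : 1 ≤ n := (Finset.mem_Icc.mp hn).1
      have hn0 : (n : ℂ) ≠ 0 := Nat.cast_ne_zero.mpr (by omega)
      rw [smul_smul, ← Complex.cpow_add _ _ hn0]
      congr 2
      ring
    have : sigmaC a ≤ (r : EReal) := sInf_le hmem
    exact absurd hra (not_lt.mpr this)
  · -- easy direction
    refine iSup₂_le fun φ hφ => ?_
    refine sInf_le_sInf fun x hx => ?_
    obtain ⟨r, rfl, hr⟩ := hx
    exact ⟨r, rfl, fun s hs => dirichletConvAt_map a φ (hr s hs)⟩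
end

section
/- For a Dirichlet series D = ∑ aₙ n^{-s} with coefficients in a Banach space X, the abscissa of uniform convergence of D equals the supremum over x* in the closed unit ball of X* of the abscissa of uniform convergence of ∑ x*(aₙ) n^{-s}. -/
open Filter Finset

/-- The partial sums of the Dirichlet series `∑ aₙ n^{-s}` converge uniformly on the open
half-plane `{s : Re s > σ}`. -/
def DirichletUnifConvOn {X : Type*} [NormedAddCommGroup X] [NormedSpace ℂ X]
    (a : ℕ → X) (σ : ℝ) : Prop :=
  ∃ f : ℂ → X, TendstoUniformlyOn
    (fun (N : ℕ) (s : ℂ) => ∑ n ∈ Finset.Icc 1 N, ((n : ℂ) ^ (-s)) • a n) f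
    atTop {s : ℂ | σ < s.re}

/-- The abscissa of uniform convergence, as an extended real. -/
noncomputable def sigmaU {X : Type*} [NormedAddCommGroup X] [NormedSpace ℂ X]
    (a : ℕ → X) : EReal :=
  sInf {x : EReal | ∃ r : ℝ, x = (r : EReal) ∧ DirichletUnifConvOn a r}

namespace SigmaUAux

open Topology


variable {X : Type*} [NormedAddCommGroup X] [NormedSpace ℂ X]
variable {Y : Type*} [NormedAddCommGroup Y] [NormedSpace ℂ Y]

/-- Partial sums of the Dirichlet series. -/
noncomputable def S (a : ℕ → X) (N : ℕ) (s : ℂ) : X :=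
  ∑ n ∈ Finset.Icc 1 N, ((n : ℂ) ^ (-s)) • a n

lemma duc_iff (a : ℕ → X) (σ : ℝ) :
    DirichletUnifConvOn a σ ↔
      ∃ f, TendstoUniformlyOn (S a) f atTop {s : ℂ | σ < s.re} := Iff.rfl

lemma duc_mono {a : ℕ → X} {r r' : ℝ} (h : r ≤ r') (hd : DirichletUnifConvOn a r) :
    DirichletUnifConvOn a r' := by
  obtain ⟨f, hf⟩ := hd
  exact ⟨f, hf.mono fun s hs => lt_of_le_of_lt (by exact_mod_cast h) hs⟩

lemma duc_comp (φ : X →L[ℂ] Y) {a : ℕ → X} {r : ℝ} (hd : DirichletUnifConvOn a r) :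
    DirichletUnifConvOn (fun n => φ (a n)) r := by
  obtain ⟨f, hf⟩ := hd
  refine ⟨fun s => φ (f s), ?_⟩
  have h2 := (φ.uniformContinuous).comp_tendstoUniformlyOn hf
  have : (fun (N : ℕ) (s : ℂ) => ∑ n ∈ Finset.Icc 1 N, ((n : ℂ) ^ (-s)) • φ (a n))
      = fun (N : ℕ) => φ ∘ (fun (s : ℂ) => ∑ n ∈ Finset.Icc 1 N, ((n : ℂ) ^ (-s)) • a n) := by
    funext N s
    simp [map_sum]
  rw [show (fun s => φ (f s)) = φ ∘ f from rfl]
  exact this ▸ h2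


lemma S_succ (a : ℕ → X) (N : ℕ) (s : ℂ) :
    S a (N+1) s = S a N s + (((N+1 : ℕ)) : ℂ) ^ (-s) • a (N+1) := by
  unfold S
  rw [Finset.sum_Icc_succ_top (by omega)]

lemma cpow_split (n : ℕ) (hn : n ≠ 0) (t : ℂ) (δ : ℝ) :
    ((n : ℂ)) ^ (-(t + (δ:ℂ))) = ((n:ℂ)) ^ (-(δ:ℂ)) * ((n:ℂ)) ^ (-t) := by
  rw [← Complex.cpow_add _ _ (by exact_mod_cast hn)]; ring_nf

-- Abel identity
lemma abel_id (a : ℕ → X) (M : ℕ) (δ : ℝ) (t : ℂ) :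
    ∀ N, M ≤ N →
      S a N (t + δ) - S a M (t + δ)
        = ((N : ℂ) ^ (-(δ:ℂ))) • (S a N t - S a M t)
          + ∑ n ∈ Finset.Ico (M+1) N,
              (((n : ℂ) ^ (-(δ:ℂ))) - (((n+1 : ℕ) : ℂ) ^ (-(δ:ℂ)))) • (S a n t - S a M t) := by
  intro N hN
  induction N, hN using Nat.le_induction with
  | base => simp
  | succ N hMN ih =>
    have hcpow : (((N+1 : ℕ)) : ℂ) ^ (-(t + (δ:ℂ))) =
        (((N+1 : ℕ)) : ℂ) ^ (-(δ:ℂ)) * (((N+1 : ℕ)) : ℂ) ^ (-t) :=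
      cpow_split (N+1) (Nat.succ_ne_zero N) t δ
    rcases eq_or_lt_of_le hMN with rfl | hlt
    · rw [Finset.Ico_self, Finset.sum_empty,
        S_succ, S_succ, hcpow]
      module
    · rw [Finset.sum_Ico_succ_top (by omega), S_succ, S_succ, hcpow]
      push_cast at ih ⊢
      linear_combination (norm := module) ih

lemma rpow_anti {δ : ℝ} (hδ : 0 < δ) {x y : ℝ} (hx : 1 ≤ x) (hxy : x ≤ y) :
    y ^ (-δ) ≤ x ^ (-δ) := by
  rw [Real.rpow_neg (by linarith), Real.rpow_neg (by linarith)]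
  exact inv_anti₀ (Real.rpow_pos_of_pos (by linarith) _)
    (Real.rpow_le_rpow (by linarith) hxy hδ.le)

lemma u_real (n : ℕ) (δ : ℝ) (hn : 1 ≤ n) :
    ((n : ℂ)) ^ (-(δ:ℂ)) = (((n:ℝ) ^ (-δ) : ℝ) : ℂ) := by
  rw [Complex.ofReal_cpow (by positivity : (0:ℝ) ≤ (n:ℝ))]
  push_cast
  ring_nf

lemma block_bound (a : ℕ → X) (σ' δ C : ℝ) (hδ : 0 < δ) (hC0 : 0 ≤ C)
    (hC : ∀ N s, σ' < s.re → ‖S a N s‖ ≤ C) :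
    ∀ M N : ℕ, ∀ s : ℂ, M ≤ N → σ' + δ < s.re →
      ‖S a N s - S a M s‖ ≤ 2 * C * ((M:ℝ)+1) ^ (-δ) := by
  intro M N s hMN hs
  have hrpos : (0:ℝ) < ((M:ℝ)+1) ^ (-δ) := Real.rpow_pos_of_pos (by positivity) _
  rcases eq_or_lt_of_le hMN with rfl | hlt
  · simp only [sub_self, norm_zero]
    positivity
  -- now M < N, so N ≥ M+1 ≥ 1
  set t : ℂ := s - (δ:ℂ) with ht
  have hts : t + (δ:ℂ) = s := by ring
  have htre : σ' < t.re := by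
    simp only [ht, Complex.sub_re, Complex.ofReal_re]
    linarith
  have hB : ∀ k : ℕ, ‖S a k t - S a M t‖ ≤ 2 * C := by
    intro k
    calc ‖S a k t - S a M t‖ ≤ ‖S a k t‖ + ‖S a M t‖ := norm_sub_le _ _
    _ ≤ C + C := add_le_add (hC k t htre) (hC M t htre)
    _ = 2 * C := by ring
  have habel := abel_id a M δ t N hMN
  rw [hts] at habel
  rw [habel]
  have hNnorm : ‖((N:ℂ)) ^ (-(δ:ℂ))‖ = (N:ℝ) ^ (-δ) := by
    rw [u_real N δ (by omega), Complex.norm_real, Real.norm_eq_abs,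
      abs_of_nonneg (Real.rpow_nonneg (by positivity) _)]
  calc ‖((N : ℂ) ^ (-(δ:ℂ))) • (S a N t - S a M t)
          + ∑ n ∈ Finset.Ico (M+1) N,
              (((n : ℂ) ^ (-(δ:ℂ))) - (((n+1 : ℕ) : ℂ) ^ (-(δ:ℂ)))) • (S a n t - S a M t)‖
      ≤ ‖((N : ℂ) ^ (-(δ:ℂ))) • (S a N t - S a M t)‖
        + ∑ n ∈ Finset.Ico (M+1) N,
            ‖(((n : ℂ) ^ (-(δ:ℂ))) - (((n+1 : ℕ) : ℂ) ^ (-(δ:ℂ)))) • (S a n t - S a M t)‖ :=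
        (norm_add_le _ _).trans (by gcongr; exact norm_sum_le _ _)
    _ ≤ (N:ℝ) ^ (-δ) * (2*C)
        + ∑ n ∈ Finset.Ico (M+1) N,
            (((n:ℝ) ^ (-δ)) - (((n:ℝ)+1) ^ (-δ))) * (2*C) := by
        gcongr with n hn
        · rw [norm_smul, hNnorm]
          exact mul_le_mul_of_nonneg_left (hB N) (Real.rpow_nonneg (by positivity) _)
        · simp only [Finset.mem_Ico] at hn
          rw [norm_smul]
          have h1 : (1:ℕ) ≤ n := by omega
          have hcoef : (((n : ℂ) ^ (-(δ:ℂ))) - (((n+1 : ℕ) : ℂ) ^ (-(δ:ℂ))))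
              = ((((n:ℝ) ^ (-δ) - ((n:ℝ)+1) ^ (-δ) : ℝ)) : ℂ) := by
            rw [u_real n δ h1, u_real (n+1) δ (by omega)]
            push_cast
            ring
          rw [hcoef, Complex.norm_real, Real.norm_eq_abs,
            abs_of_nonneg (by
              have := rpow_anti hδ (by exact_mod_cast h1 : (1:ℝ) ≤ (n:ℝ))
                (by linarith : (n:ℝ) ≤ (n:ℝ)+1)
              linarith)]
          exact mul_le_mul_of_nonneg_left (hB n) (by
            have := rpow_anti hδ (by exact_mod_cast h1 : (1:ℝ) ≤ (n:ℝ))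
              (by linarith : (n:ℝ) ≤ (n:ℝ)+1)
            linarith)
    _ = 2 * C * ((N:ℝ) ^ (-δ)
          + ∑ n ∈ Finset.Ico (M+1) N, (((n:ℝ) ^ (-δ)) - (((n:ℝ)+1) ^ (-δ)))) := by
        rw [← Finset.sum_mul]; ring
    _ = 2 * C * (((M:ℝ)+1) ^ (-δ)) := by
        have htel : ∑ n ∈ Finset.Ico (M+1) N, (((n:ℝ) ^ (-δ)) - (((n:ℝ)+1) ^ (-δ)))
            = (((M+1:ℕ):ℝ)) ^ (-δ) - ((N:ℝ)) ^ (-δ) := by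
          have : ∀ m n : ℕ, m ≤ n → ∑ i ∈ Finset.Ico m n,
              (((i:ℝ) ^ (-δ)) - (((i:ℝ)+1) ^ (-δ))) = ((m:ℝ)) ^ (-δ) - ((n:ℝ)) ^ (-δ) := by
            intro m n h
            induction n, h using Nat.le_induction with
            | base => simp
            | succ n hmn ih => rw [Finset.sum_Ico_succ_top hmn, ih]; push_cast; ring
          exact (this (M+1) N (by omega)).trans (by push_cast; ring_nf)
        rw [htel]
        push_cast
        ring

lemma S_map (φ : X →L[ℂ] ℂ) (a : ℕ → X) (N : ℕ) (s : ℂ) :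
    φ (S a N s) = S (fun n => φ (a n)) N s := by
  unfold S
  rw [map_sum]
  simp only [map_smul]

lemma S_le_sum (b : ℕ → X) (N : ℕ) (s : ℂ) (σ' : ℝ) (hs : σ' < s.re) :
    ‖S b N s‖ ≤ ∑ n ∈ Finset.Icc 1 N, (n:ℝ) ^ (-σ') * ‖b n‖ := by
  refine (norm_sum_le _ _).trans (Finset.sum_le_sum fun n hn => ?_)
  simp only [Finset.mem_Icc] at hn
  rw [norm_smul, Complex.norm_natCast_cpow_of_pos (by omega), Complex.neg_re]
  have h1 : (1:ℝ) ≤ (n:ℝ) := by exact_mod_cast hn.1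
  exact mul_le_mul_of_nonneg_right
    (Real.rpow_le_rpow_of_exponent_le h1 (by linarith)) (norm_nonneg _)


lemma duc_bound (b : ℕ → X) (σ' : ℝ) (h : DirichletUnifConvOn b σ') :
    ∃ C, ∀ (N : ℕ) (s : ℂ), σ' < s.re → ‖S b N s‖ ≤ C := by
  obtain ⟨f, hf⟩ := (duc_iff b σ').mp h
  rw [Metric.tendstoUniformlyOn_iff] at hf
  obtain ⟨N0, hN0⟩ := Filter.eventually_atTop.mp (hf 1 one_pos)
  refine ⟨(∑ n ∈ Finset.Icc 1 N0, (n:ℝ) ^ (-σ') * ‖b n‖) + 2, fun N s hs => ?_⟩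
  have hsum : ∀ K : ℕ, K ≤ N0 → ‖S b K s‖ ≤ ∑ n ∈ Finset.Icc 1 N0, (n:ℝ) ^ (-σ') * ‖b n‖ := by
    intro K hK
    refine (S_le_sum b K s σ' hs).trans ?_
    refine Finset.sum_le_sum_of_subset_of_nonneg
      (Finset.Icc_subset_Icc_right hK) fun n _ _ => ?_
    positivity
  rcases le_or_gt N N0 with hN | hN
  · have := hsum N hN
    linarith
  · have h1 := hN0 N (by omega) s hs
    have h2 := hN0 N0 le_rfl s hs
    have h3 : ‖S b N s - S b N0 s‖ < 2 := by
      have := dist_triangle (S b N s) (f s) (S b N0 s)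
      rw [← dist_eq_norm]
      have e1 : dist (S b N s) (f s) < 1 := by rw [dist_comm]; exact h1
      have e2 : dist (f s) (S b N0 s) < 1 := h2
      linarith
    have h4 : ‖S b N s‖ ≤ ‖S b N s - S b N0 s‖ + ‖S b N0 s‖ := by
      have := norm_add_le (S b N s - S b N0 s) (S b N0 s)
      simpa using this
    have := hsum N0 le_rfl
    linarith

lemma unif_bound (a : ℕ → X) (σ' : ℝ)
    (h : ∀ φ : X →L[ℂ] ℂ, DirichletUnifConvOn (fun n => φ (a n)) σ') :
    ∃ C : ℝ, 0 ≤ C ∧ ∀ (N : ℕ) (s : ℂ), σ' < s.re → ‖S a N s‖ ≤ C := by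
  obtain ⟨C', hC'⟩ := banach_steinhaus
      (g := fun i : ℕ × {s : ℂ // σ' < s.re} =>
        NormedSpace.inclusionInDoubleDual ℂ X (S a i.1 i.2.1))
      (fun φ => by
        obtain ⟨C, hC⟩ := duc_bound (fun n => φ (a n)) σ' (h φ)
        exact ⟨C, fun i => by
          rw [NormedSpace.dual_def, S_map]
          exact hC i.1 i.2.1 i.2.2⟩)
  refine ⟨max C' 0, le_max_right _ _, fun N s hs => ?_⟩
  refine NormedSpace.norm_le_dual_bound ℂ _ (le_max_right _ _) fun φ => ?_
  calc ‖φ (S a N s)‖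
      = ‖NormedSpace.inclusionInDoubleDual ℂ X (S a N s) φ‖ := by
        rw [NormedSpace.dual_def]
    _ ≤ ‖NormedSpace.inclusionInDoubleDual ℂ X (S a N s)‖ * ‖φ‖ :=
        ContinuousLinearMap.le_opNorm _ _
    _ ≤ max C' 0 * ‖φ‖ := by
        have := hC' (N, ⟨s, hs⟩)
        exact mul_le_mul_of_nonneg_right (this.trans (le_max_left _ _)) (norm_nonneg _)

lemma key [CompleteSpace X] (a : ℕ → X) (σ' δ : ℝ) (hδ : 0 < δ)
    (h : ∀ φ : X →L[ℂ] ℂ, DirichletUnifConvOn (fun n => φ (a n)) σ') :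
    DirichletUnifConvOn a (σ' + δ) := by
  obtain ⟨C, hC0, hC⟩ := unif_bound a σ' h
  have hblock := block_bound a σ' δ C hδ hC0 hC
  have hcauchy : UniformCauchySeqOn (S a) atTop {s : ℂ | σ' + δ < s.re} := by
    rw [Metric.uniformCauchySeqOn_iff]
    intro ε hε
    have htend : Tendsto (fun K : ℕ => 2 * C * (((K:ℝ)+1) ^ (-δ))) atTop (𝓝 (2*C*0)) :=
      Tendsto.const_mul _ ((tendsto_rpow_neg_atTop hδ).comp
        (tendsto_atTop_add_const_right atTop 1 tendsto_natCast_atTop_atTop))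
    rw [mul_zero] at htend
    obtain ⟨K, hK⟩ := (htend.eventually_lt_const hε).exists
    have hstep : ∀ m n : ℕ, K ≤ m → m ≤ n → ∀ x : ℂ, x ∈ {s : ℂ | σ' + δ < s.re} →
        ‖S a n x - S a m x‖ < ε := by
      intro m n hm hmn x hx
      refine lt_of_le_of_lt ((hblock m n x hmn hx).trans ?_) hK
      refine mul_le_mul_of_nonneg_left ?_ (by linarith)
      exact rpow_anti hδ (by simp [Nat.cast_nonneg]) (by exact_mod_cast Nat.succ_le_succ hm)
    refine ⟨K, fun m hm n hn x hx => ?_⟩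
    rw [dist_eq_norm]
    rcases le_total m n with hmn | hmn
    · rw [norm_sub_rev]; exact hstep m n hm hmn x hx
    · exact hstep n m hn hmn x hx
  exact (duc_iff a (σ' + δ)).mpr
    ⟨fun s => limUnder atTop (fun N => S a N s),
      hcauchy.tendstoUniformlyOn_of_tendsto fun x hx =>
        (hcauchy.cauchySeq hx).tendsto_limUnder⟩

lemma duc_zero (r : ℝ) : DirichletUnifConvOn (fun _ : ℕ => (0 : ℂ)) r := by
  refine ⟨fun _ => 0, ?_⟩
  have he : (fun (N : ℕ) (s : ℂ) => ∑ n ∈ Finset.Icc 1 N, ((n : ℂ) ^ (-s)) • (0:ℂ))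
      = fun (_ : ℕ) (_ : ℂ) => (0:ℂ) := by
    funext N s; simp
  rw [he]
  exact Filter.Tendsto.tendstoUniformlyOn_const tendsto_const_nhds _

lemma duc_of_ball (a : ℕ → X) (r : ℝ)
    (h : ∀ φ : X →L[ℂ] ℂ, ‖φ‖ ≤ 1 → DirichletUnifConvOn (fun n => φ (a n)) r)
    (φ : X →L[ℂ] ℂ) : DirichletUnifConvOn (fun n => φ (a n)) r := by
  rcases eq_or_ne φ 0 with rfl | hφ
  · simpa using duc_zero r
  · have hn : (0:ℝ) < ‖φ‖ := norm_pos_iff.mpr hφ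
    set ψ : X →L[ℂ] ℂ := ‖φ‖⁻¹ • φ with hψ
    have hψn : ‖ψ‖ ≤ 1 := by
      rw [hψ]
      refine ContinuousLinearMap.opNorm_le_bound _ zero_le_one fun x => ?_
      simp only [ContinuousLinearMap.coe_smul', Pi.smul_apply, norm_smul, norm_inv,
        Real.norm_eq_abs, abs_of_pos hn, one_mul]
      rw [inv_mul_le_iff₀ hn]
      exact φ.le_opNorm x |>.trans (by rw [mul_comm])
    have hd := h ψ hψn
    have hd2 := duc_comp ((‖φ‖ : ℂ) • ContinuousLinearMap.id ℂ ℂ) hd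
    have he : (fun n => ((‖φ‖ : ℂ) • ContinuousLinearMap.id ℂ ℂ) (ψ (a n)))
        = fun n => φ (a n) := by
      funext n
      simp only [ContinuousLinearMap.smul_apply, ContinuousLinearMap.id_apply, hψ,
        ContinuousLinearMap.coe_smul', Pi.smul_apply]
      rw [smul_eq_mul, Complex.real_smul]
      have hz : (‖φ‖ : ℂ) ≠ 0 := by exact_mod_cast hn.ne'
      field_simp
      rw [Complex.ofReal_div, Complex.ofReal_one, mul_one_div_cancel hz, one_mul]
    rwa [he] at hd2

end SigmaUAux

/-- The abscissa of uniform convergence of a vector-valued Dirichlet series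
equals the supremum, over functionals in the closed unit ball of the dual, of the abscissas
of uniform convergence of the scalarized series. -/
theorem sigmaU_eq_iSup_dual
    (X : Type*) [NormedAddCommGroup X] [NormedSpace ℂ X] [CompleteSpace X]
    (a : ℕ → X) :
    sigmaU a = ⨆ (φ : X →L[ℂ] ℂ) (_ : ‖φ‖ ≤ 1), sigmaU (fun n => φ (a n)) := by
  apply le_antisymm
  · refine le_of_forall_gt_imp_ge_of_dense fun c hc => ?_
    obtain ⟨σ1, hσ1R, hσ1c⟩ := EReal.exists_between_coe_real hc
    obtain ⟨σ2, h12, h2c⟩ := EReal.exists_between_coe_real hσ1c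
    have hduc : ∀ φ : X →L[ℂ] ℂ, ‖φ‖ ≤ 1 → DirichletUnifConvOn (fun n => φ (a n)) σ1 := by
      intro φ hφ
      have hlt : sigmaU (fun n => φ (a n)) < (σ1 : EReal) :=
        lt_of_le_of_lt
          (le_iSup₂ (f := fun (φ : X →L[ℂ] ℂ) (_ : ‖φ‖ ≤ 1) => sigmaU fun n => φ (a n)) φ hφ)
          hσ1R
    -- unfold sigmaU
      obtain ⟨x, ⟨r, rfl, hr⟩, hxlt⟩ := sInf_lt_iff.mp hlt
      exact SigmaUAux.duc_mono (by exact_mod_cast hxlt.le) hr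
    have h12' : σ1 < σ2 := by exact_mod_cast h12
    have h2 : DirichletUnifConvOn a σ2 := by
      have := SigmaUAux.key a σ1 (σ2 - σ1) (by linarith)
        (fun φ => SigmaUAux.duc_of_ball a σ1 hduc φ)
      rwa [show σ1 + (σ2 - σ1) = σ2 by ring] at this
    calc sigmaU a ≤ (σ2 : EReal) := sInf_le ⟨σ2, rfl, h2⟩
      _ ≤ c := h2c.le
  · refine iSup₂_le fun φ hφ => ?_
    refine sInf_le_sInf ?_
    rintro x ⟨r, rfl, hr⟩
    exact ⟨r, rfl, SigmaUAux.duc_comp φ hr⟩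
end
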